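/- arXiv:math/0407158 — 3 statements merged into one kernel-verified Lean document; each statement's English description precedes it below -/
import Mathlib

section
/- For an invertible n×n matrix M over a field, the rank of the submatrix M_{ij} consisting of the first i rows and first j columns is unchanged under left multiplication of M by any invertible lower triangular matrix. -/
/-- The submatrix of the first `i` rows and first `j` columns of an `n × n` matrix. -/
def subM {K : Type*} {n : ℕ} (M : Matrix (Fin n) (Fin n) K) (i j : ℕ)
    (hi : i ≤ n) (hj : j ≤ n) : Matrix (Fin i) (Fin j) K :=
  M.submatrix (Fin.castLE hi) (Fin.castLE hj)

/-- For an invertible matrix `M`, the rank of the submatrix of the first `i` rows and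
`j` columns is unchanged under left multiplication by an invertible lower triangular
matrix. -/
theorem rank_subM_lower_mul {K : Type*} [Field K] {n : ℕ}
    (M L : Matrix (Fin n) (Fin n) K) (hM : IsUnit M.det) (hL : IsUnit L.det)
    (hLtri : ∀ i j : Fin n, i < j → L i j = 0)
    (i j : ℕ) (hi : i ≤ n) (hj : j ≤ n) :
    (subM (L * M) i j hi hj).rank = (subM M i j hi hj).rank := by
  set L' := subM L i i hi hi with hL'
  have hkey : subM (L * M) i j hi hj = L' * subM M i j hi hj := by
    ext a b
    simp only [subM, Matrix.submatrix_apply, Matrix.mul_apply, hL']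
    symm
    calc ∑ k : Fin i, L (Fin.castLE hi a) (Fin.castLE hi k) * M (Fin.castLE hi k) (Fin.castLE hj b)
        = ∑ k ∈ (Finset.univ : Finset (Fin i)).map (Fin.castLEEmb hi),
            L (Fin.castLE hi a) k * M k (Fin.castLE hj b) := by
          rw [Finset.sum_map]; rfl
      _ = ∑ k : Fin n, L (Fin.castLE hi a) k * M k (Fin.castLE hj b) := by
          apply Finset.sum_subset (Finset.subset_univ _)
          intro k _ hk
          have hik : ¬ (k : ℕ) < i := by
            intro h
            exact hk (Finset.mem_map.mpr ⟨⟨k, h⟩, Finset.mem_univ _, rfl⟩)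
          have : L (Fin.castLE hi a) k = 0 := by
            apply hLtri
            simp only [Fin.lt_def, Fin.coe_castLE]
            omega
          simp [this]
  have hL'tri : L'.BlockTriangular OrderDual.toDual := by
    intro a b hab
    have h2 : a < b := hab
    apply hLtri
    simp only [Fin.lt_def, Fin.coe_castLE]
    exact h2
  have hLtri' : L.BlockTriangular OrderDual.toDual := fun a b hab => hLtri a b hab
  have hdetL' : L'.det = ∏ a : Fin i, L' a a := Matrix.det_of_lowerTriangular _ hL'tri
  have hdetL : L.det = ∏ a : Fin n, L a a := Matrix.det_of_lowerTriangular _ hLtri'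
  have hdiag : ∀ a : Fin n, L a a ≠ 0 := by
    rw [hdetL, isUnit_iff_ne_zero, Finset.prod_ne_zero_iff] at hL
    exact fun a => hL a (Finset.mem_univ a)
  have hdetL'unit : IsUnit L'.det := by
    rw [hdetL', isUnit_iff_ne_zero, Finset.prod_ne_zero_iff]
    exact fun a _ => hdiag _
  rw [hkey]
  exact Matrix.rank_mul_eq_right_of_isUnit_det L' _ hdetL'unit
end

section
/- The degree of a graded quotient by a monomial ideal is invariant under Gröbner deformation: for a homogeneous ideal I in a polynomial ring S over a field with a graded term order, the Hilbert function of S/I equals the Hilbert function of S/in(I), where in(I) is the initial ideal. -/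
open MvPolynomial

/-- The leading exponent of a polynomial with respect to a monomial order:
the maximum, for the order, of the exponents in its support. -/
noncomputable def leadExp {σ : Type*} (m : MonomialOrder σ) {k : Type*} [Field k]
    (f : MvPolynomial σ k) : σ →₀ ℕ :=
  m.toSyn.symm (f.support.sup (fun d => m.toSyn d))

/-- The initial ideal of `I`: generated by the leading monomials of the nonzero
elements of `I`. -/
noncomputable def initialIdeal {σ : Type*} (m : MonomialOrder σ) {k : Type*} [Field k]
    (I : Ideal (MvPolynomial σ k)) : Ideal (MvPolynomial σ k) :=
  Ideal.span {g | ∃ f ∈ I, f ≠ 0 ∧ g = monomial (leadExp m f) (1 : k)}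

/-- The Hilbert function of a graded quotient `S/I`. -/
noncomputable def hilbFn (k : Type*) [Field k] {n : ℕ}
    (I : Ideal (MvPolynomial (Fin n) k)) (d : ℕ) : ℕ :=
  Module.finrank k
    ((homogeneousSubmodule (Fin n) k d) ⧸
      (Submodule.comap (homogeneousSubmodule (Fin n) k d).subtype (I.restrictScalars k)))

/-! Polynomials with pairwise distinct leading exponents are linearly independent, and an
element of a subspace `V` is determined by its coefficients at the leading exponents of `V`; so
`dim V` is the number of leading exponents of `V`. Since `I` is homogeneous, a leading exponent `a`
of some `f ∈ I` is also the leading exponent of the homogeneous component of `f` of degree `|a|`,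
so the leading exponents of `I_d = I ∩ S_d` are the degree-`d` leading exponents of `I`. The same
holds for the monomial ideal `in(I)`, whose leading exponents are exactly those of `I`. Hence `I_d`
and `in(I)_d` have the same dimension, and so do `S_d/I_d` and `S_d/in(I)_d`. -/

namespace MonomialOrder

variable {σ : Type*} (m : MonomialOrder σ) {k : Type*} [Field k]

theorem leadExp_eq_degree (f : MvPolynomial σ k) : leadExp m f = m.degree f := rfl

def leadExps (V : Submodule k (MvPolynomial σ k)) : Set (σ →₀ ℕ) :=
  {a | ∃ f ∈ V, f ≠ 0 ∧ m.degree f = a}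

theorem linearIndependent_of_injective_degree {ι : Type*} {F : ι → MvPolynomial σ k}
    (hF : ∀ i, F i ≠ 0) (hinj : Function.Injective (m.degree ∘ F)) :
    LinearIndependent k F := by
  classical
  rw [linearIndependent_iff']
  intro s c hsum i hi
  by_contra hci
  obtain ⟨j, hj, hjmax⟩ := (s.filter (c · ≠ 0)).exists_max_image
    (fun i => m.toSyn (m.degree (F i))) ⟨i, Finset.mem_filter.mpr ⟨hi, hci⟩⟩
  rw [Finset.mem_filter] at hj
  have hcoeff : coeff (m.degree (F j)) (∑ i ∈ s, c i • F i) = c j * m.leadingCoeff (F j) := by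
    rw [coeff_sum, Finset.sum_eq_single_of_mem j hj.1, coeff_smul, smul_eq_mul, leadingCoeff]
    intro i hi hij
    by_cases hc : c i = 0
    · rw [hc, zero_smul, coeff_zero]
    have hlt : m.toSyn (m.degree (F i)) < m.toSyn (m.degree (F j)) :=
      (hjmax i (Finset.mem_filter.mpr ⟨hi, hc⟩)).lt_of_ne
        fun h => hij (hinj (m.toSyn.injective h))
    rw [coeff_smul, m.coeff_eq_zero_of_lt hlt, smul_zero]
  rw [hsum, coeff_zero] at hcoeff
  exact mul_ne_zero hj.2 (m.leadingCoeff_ne_zero_iff.mpr (hF j)) hcoeff.symm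

theorem finrank_eq_card_leadExps (V : Submodule k (MvPolynomial σ k)) [FiniteDimensional k V] :
    Module.finrank k V = Nat.card (m.leadExps V) := by
  have hchoice (a : m.leadExps V) :
      ∃ f : V, (f : MvPolynomial σ k) ≠ 0 ∧ m.degree (f : MvPolynomial σ k) = a := by
    obtain ⟨a, f, hfV, hf0, rfl⟩ := a
    exact ⟨⟨f, hfV⟩, hf0, rfl⟩
  choose F hF0 hFdeg using hchoice
  have hli : LinearIndependent k F := .of_comp V.subtype <|
    m.linearIndependent_of_injective_degree hF0 fun a b h => Subtype.ext <| by
      simpa only [Function.comp_apply, Submodule.subtype_apply, hFdeg] using h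
  have := hli.finite
  let _ := Fintype.ofFinite (m.leadExps V)
  rw [Nat.card_eq_fintype_card]
  refine le_antisymm ?_ hli.fintype_card_le_finrank
  let coeffs : V →ₗ[k] (m.leadExps V → k) :=
    LinearMap.pi fun a => (lcoeff k a).comp V.subtype
  have hcoeffs : Function.Injective coeffs := by
    refine (injective_iff_map_eq_zero coeffs).mpr fun f hf => ?_
    by_contra hf0
    have hf0' : (f : MvPolynomial σ k) ≠ 0 := fun h => hf0 (Subtype.ext h)
    have := congrFun hf ⟨m.degree (f : MvPolynomial σ k), f, f.2, hf0', rfl⟩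
    exact m.coeff_degree_ne_zero_iff.mpr hf0' this
  exact (coeffs.finrank_le_finrank_of_injective hcoeffs).trans_eq
    (Module.finrank_fintype_fun_eq_card k)

section CommSemiring

variable {R : Type*} [CommSemiring R]

theorem degree_mem_support_homogeneousComponent_degree {f : MvPolynomial σ R} (hf : f ≠ 0) :
    m.degree f ∈ (homogeneousComponent (m.degree f).degree f).support := by
  classical
  rw [support_homogeneousComponent, Finset.mem_filter]
  exact ⟨m.degree_mem_support hf, rfl⟩

theorem degree_homogeneousComponent_degree (f : MvPolynomial σ R) :
    m.degree (homogeneousComponent (m.degree f).degree f) = m.degree f := by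
  classical
  rcases eq_or_ne f 0 with rfl | hf
  · simp
  refine m.toSyn.injective <| le_antisymm (m.degree_le_iff.mpr fun c hc => ?_)
    (m.le_degree (m.degree_mem_support_homogeneousComponent_degree hf))
  rw [support_homogeneousComponent, Finset.mem_filter] at hc
  exact m.le_degree hc.1

end CommSemiring

theorem leadExps_homogeneousSubmodule_inf (V : Submodule k (MvPolynomial σ k))
    (hV : ∀ f ∈ V, ∀ d : ℕ, homogeneousComponent d f ∈ V) (d : ℕ) :
    m.leadExps (homogeneousSubmodule σ k d ⊓ V) = {a ∈ m.leadExps V | a.degree = d} := by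
  ext a
  constructor
  · rintro ⟨f, ⟨hfd, hfV⟩, hf0, rfl⟩
    refine ⟨⟨f, hfV, hf0, rfl⟩, ?_⟩
    rw [Finsupp.degree_eq_weight_one]
    exact hfd (m.coeff_degree_ne_zero_iff.mpr hf0)
  · rintro ⟨⟨f, hfV, hf0, rfl⟩, rfl⟩
    exact ⟨_, ⟨homogeneousComponent_mem _ f, hV f hfV _⟩,
      support_nonempty.mp ⟨_, m.degree_mem_support_homogeneousComponent_degree hf0⟩,
      m.degree_homogeneousComponent_degree f⟩

theorem initialIdeal_eq_span_monomial_leadExps (I : Ideal (MvPolynomial σ k)) :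
    initialIdeal m I =
      Ideal.span ((fun a => monomial a (1 : k)) '' m.leadExps (I.restrictScalars k)) := by
  simp only [initialIdeal, leadExp_eq_degree]
  congr 1
  ext g
  constructor
  · rintro ⟨f, hf, hf0, rfl⟩
    exact ⟨_, ⟨f, hf, hf0, rfl⟩, rfl⟩
  · rintro ⟨_, ⟨f, hf, hf0, rfl⟩, rfl⟩
    exact ⟨f, hf, hf0, rfl⟩

theorem mem_initialIdeal_iff {I : Ideal (MvPolynomial σ k)} {f : MvPolynomial σ k} :
    f ∈ initialIdeal m I ↔ ∀ a ∈ f.support, ∃ b ∈ m.leadExps (I.restrictScalars k), b ≤ a := by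
  rw [initialIdeal_eq_span_monomial_leadExps, mem_ideal_span_monomial_image]

theorem isUpperSet_leadExps (I : Ideal (MvPolynomial σ k)) :
    IsUpperSet (m.leadExps (I.restrictScalars k)) := by
  classical
  rintro b a hba ⟨g, hgI, hg0, rfl⟩
  have hmon : monomial (a - m.degree g) (1 : k) ≠ 0 := by simp
  refine ⟨monomial (a - m.degree g) 1 * g, I.mul_mem_left _ hgI, mul_ne_zero hmon hg0, ?_⟩
  rw [m.degree_mul hmon hg0, m.degree_monomial, if_neg one_ne_zero, tsub_add_cancel_of_le hba]

theorem leadExps_initialIdeal (I : Ideal (MvPolynomial σ k)) :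
    m.leadExps ((initialIdeal m I).restrictScalars k) = m.leadExps (I.restrictScalars k) := by
  classical
  ext a
  constructor
  · rintro ⟨f, hf, hf0, rfl⟩
    obtain ⟨b, hb, hba⟩ := m.mem_initialIdeal_iff.mp hf _ (m.degree_mem_support hf0)
    exact m.isUpperSet_leadExps I hba hb
  · rintro ⟨g, hgI, hg0, rfl⟩
    refine ⟨monomial (m.degree g) 1, ?_, by simp, by simp [degree_monomial]⟩
    rw [Submodule.restrictScalars_mem, initialIdeal_eq_span_monomial_leadExps]
    exact Ideal.subset_span (Set.mem_image_of_mem _ ⟨g, hgI, hg0, rfl⟩)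

theorem homogeneousComponent_mem_initialIdeal {I : Ideal (MvPolynomial σ k)}
    {f : MvPolynomial σ k} (hf : f ∈ initialIdeal m I) (d : ℕ) :
    homogeneousComponent d f ∈ initialIdeal m I := by
  classical
  rw [mem_initialIdeal_iff] at hf ⊢
  intro a ha
  rw [support_homogeneousComponent, Finset.mem_filter] at ha
  exact hf a ha.1

end MonomialOrder

theorem Submodule.finrank_quotient_comap_subtype_add_finrank_inf {K V : Type*} [DivisionRing K]
    [AddCommGroup V] [Module K V] (W U : Submodule K V) [FiniteDimensional K W] :
    Module.finrank K (W ⧸ U.comap W.subtype) + Module.finrank K ↥(W ⊓ U) =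
      Module.finrank K W := by
  rw [← Submodule.map_comap_subtype, Submodule.finrank_map_subtype_eq]
  exact Submodule.finrank_quotient_add_finrank _

theorem hilbFn_eq_hilbFn_initialIdeal_general {k : Type*} [Field k] {n : ℕ}
    (m : MonomialOrder (Fin n))
    (I : Ideal (MvPolynomial (Fin n) k))
    (hI : ∀ f ∈ I, ∀ d : ℕ, homogeneousComponent d f ∈ I) :
    ∀ d : ℕ, hilbFn k I d = hilbFn k (initialIdeal m I) d := by
  intro d
  have : FiniteDimensional k (homogeneousSubmodule (Fin n) k d) :=
    .of_fg (homogeneousSubmodule_fg _ _ d)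
  have hilbFn_add_finrank (J : Ideal (MvPolynomial (Fin n) k)) :
      hilbFn k J d +
          Module.finrank k ↥(homogeneousSubmodule (Fin n) k d ⊓ J.restrictScalars k) =
        Module.finrank k (homogeneousSubmodule (Fin n) k d) :=
    Submodule.finrank_quotient_comap_subtype_add_finrank_inf _ _
  have hfinrank :
      Module.finrank k ↥(homogeneousSubmodule (Fin n) k d ⊓ I.restrictScalars k) =
        Module.finrank k ↥(homogeneousSubmodule (Fin n) k d ⊓
          (initialIdeal m I).restrictScalars k) := by
    rw [m.finrank_eq_card_leadExps, m.finrank_eq_card_leadExps,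
      m.leadExps_homogeneousSubmodule_inf _ hI,
      m.leadExps_homogeneousSubmodule_inf _ fun _ hf => m.homogeneousComponent_mem_initialIdeal hf,
      m.leadExps_initialIdeal]
  have := hilbFn_add_finrank I
  have := hilbFn_add_finrank (initialIdeal m I)
  omega

/-- Gröbner deformation preserves Hilbert functions: for a homogeneous ideal `I` and
a monomial order refining total degree, the Hilbert function of `S/I` equals that of
`S/in(I)`. -/
theorem hilbFn_eq_hilbFn_initialIdeal {k : Type*} [Field k] {n : ℕ}
    (m : MonomialOrder (Fin n))
    (hgraded : ∀ u v : Fin n →₀ ℕ,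
      (u.sum fun _ e => e) < (v.sum fun _ e => e) → m.toSyn u < m.toSyn v)
    (I : Ideal (MvPolynomial (Fin n) k))
    (hI : ∀ f ∈ I, ∀ d : ℕ, homogeneousComponent d f ∈ I) :
    ∀ d : ℕ, hilbFn k I d = hilbFn k (initialIdeal m I) d :=
  hilbFn_eq_hilbFn_initialIdeal_general m I hI
end

section
/- Any invertible n×n matrix M over a field can be written as M = L·W·U where L is lower triangular invertible, U is upper triangular invertible, and W is a permutation matrix; moreover the permutation matrix W in such a decomposition is unique. -/
/-!
Existence is Gaussian elimination with a pivot chosen compatibly with both triangular groups: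
the pivot of the first column is its topmost nonzero entry `M r 0`. Lower triangular row
operations then clear the column below it, upper triangular column operations clear its row,
and the Schur complement of the pivot is decomposed recursively.

Uniqueness: for initial segments `s`, `t` of the index order, the rank of the `s × t` corner of
`M` does not change under `M ↦ L * M * U`: the rows of `L * M` indexed by `s` are combinations of
the rows of `M` indexed by `s`, and dually for the columns of `M * U` indexed by `t`. For a permutation matrix this rank is `#{i ∈ s | w i ∈ t}`, and these
counts determine `w`.
-/

open Matrix Set

namespace Matrix

lemma fromBlocks_eq_mul_mul_of_invertible₁₁ {l m R : Type*} [Fintype l] [Fintype m]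
    [DecidableEq l] [DecidableEq m] [Ring R]
    (A : Matrix m m R) (B : Matrix m l R) (C : Matrix l m R) (D : Matrix l l R) [Invertible A] :
    fromBlocks A B C D =
      fromBlocks A 0 C 1 * fromBlocks 1 0 0 (D - C * ⅟A * B) * fromBlocks 1 (⅟A * B) 0 1 := by
  simp [fromBlocks_multiply, Matrix.mul_assoc, Matrix.mul_invOf_cancel_left]

end Matrix

section InsertPivot

variable {n : ℕ}

def finSuccEquivUnitSum (r : Fin (n + 1)) : Fin (n + 1) ≃ Unit ⊕ Fin n :=
  ((finSuccEquiv' r).trans (Equiv.optionEquivSumPUnit _)).trans (Equiv.sumComm _ _)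

@[simp] lemma finSuccEquivUnitSum_self (r : Fin (n + 1)) :
    finSuccEquivUnitSum r r = Sum.inl () := by
  simp [finSuccEquivUnitSum]

@[simp] lemma finSuccEquivUnitSum_succAbove (r : Fin (n + 1)) (a : Fin n) :
    finSuccEquivUnitSum r (r.succAbove a) = Sum.inr a := by
  simp [finSuccEquivUnitSum]

@[simp] lemma finSuccEquivUnitSum_symm_inl (r : Fin (n + 1)) (u : Unit) :
    (finSuccEquivUnitSum r).symm (Sum.inl u) = r := by
  simp [finSuccEquivUnitSum]

@[simp] lemma finSuccEquivUnitSum_symm_inr (r : Fin (n + 1)) (a : Fin n) :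
    (finSuccEquivUnitSum r).symm (Sum.inr a) = r.succAbove a := by
  simp [finSuccEquivUnitSum]

/-- The permutation sending `r` to `c` and `r.succAbove a` to `c.succAbove (w a)`. -/
def Equiv.Perm.insertPivot (r c : Fin (n + 1)) (w : Equiv.Perm (Fin n)) :
    Equiv.Perm (Fin (n + 1)) :=
  (finSuccEquivUnitSum r).trans
    ((Equiv.sumCongr (Equiv.refl Unit) w).trans (finSuccEquivUnitSum c).symm)

namespace Matrix

section Semiring

variable {R : Type*} [Semiring R]

/-- The matrix with entry `1` at `(r, c)`, zeros elsewhere in row `r` and column `c`, and `N` on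
the remaining rows and columns. -/
def insertPivot (r c : Fin (n + 1)) (N : Matrix (Fin n) (Fin n) R) :
    Matrix (Fin (n + 1)) (Fin (n + 1)) R :=
  (fromBlocks 1 0 0 N).submatrix (finSuccEquivUnitSum r) (finSuccEquivUnitSum c)

lemma insertPivot_mul_insertPivot (r c d : Fin (n + 1)) (N N' : Matrix (Fin n) (Fin n) R) :
    insertPivot r c N * insertPivot c d N' = insertPivot r d (N * N') := by
  simp [insertPivot, submatrix_mul_equiv, fromBlocks_multiply]

lemma insertPivot_permMatrix (r c : Fin (n + 1)) (w : Equiv.Perm (Fin n)) :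
    insertPivot r c (w.permMatrix R) = (w.insertPivot r c).permMatrix R := by
  ext i j
  obtain ⟨x, rfl⟩ := (finSuccEquivUnitSum r).symm.surjective i
  obtain ⟨y, rfl⟩ := (finSuccEquivUnitSum c).symm.surjective j
  rcases x with _ | a <;> rcases y with _ | b <;>
    simp [insertPivot, Equiv.Perm.insertPivot, PEquiv.toMatrix_apply]

lemma isLowerTriangular_fromBlocks_submatrix (r : Fin (n + 1)) (A : Matrix Unit Unit R)
    {C : Matrix (Fin n) Unit R} {D : Matrix (Fin n) (Fin n) R}
    (hC : ∀ a, r.succAbove a < r → C a () = 0) (hD : D.IsLowerTriangular) :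
    ((fromBlocks A 0 C D).submatrix (finSuccEquivUnitSum r)
      (finSuccEquivUnitSum r)).IsLowerTriangular := by
  intro i j hij
  obtain ⟨x, rfl⟩ := (finSuccEquivUnitSum r).symm.surjective i
  obtain ⟨y, rfl⟩ := (finSuccEquivUnitSum r).symm.surjective j
  rcases x with _ | a <;> rcases y with _ | b <;> simp at hij ⊢
  · exact hC a hij
  · exact hD hij

lemma isUpperTriangular_fromBlocks_submatrix (A : Matrix Unit Unit R) (B : Matrix Unit (Fin n) R)
    {D : Matrix (Fin n) (Fin n) R} (hD : D.IsUpperTriangular) :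
    ((fromBlocks A B 0 D).submatrix (finSuccEquivUnitSum 0)
      (finSuccEquivUnitSum 0)).IsUpperTriangular := by
  intro i j hij
  obtain ⟨x, rfl⟩ := (finSuccEquivUnitSum 0).symm.surjective i
  obtain ⟨y, rfl⟩ := (finSuccEquivUnitSum 0).symm.surjective j
  simp only [submatrix_apply, Equiv.apply_symm_apply]
  rcases x with _ | a <;> rcases y with _ | b <;> simp at hij ⊢
  exact hD hij

end Semiring

lemma det_insertPivot {R : Type*} [CommRing R] (r : Fin (n + 1)) (N : Matrix (Fin n) (Fin n) R) :
    (insertPivot r r N).det = N.det := by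
  rw [insertPivot, det_submatrix_equiv_self, det_fromBlocks_zero₂₁, det_one, one_mul]

end Matrix

end InsertPivot

namespace Matrix

variable {K : Type*} [Field K]

theorem exists_eq_mul_insertPivot_mul {n : ℕ} (M : Matrix (Fin (n + 1)) (Fin (n + 1)) K)
    (hM : IsUnit M.det) :
    ∃ (r : Fin (n + 1)) (L U : Matrix (Fin (n + 1)) (Fin (n + 1)) K)
      (N : Matrix (Fin n) (Fin n) K),
      L.IsLowerTriangular ∧ IsUnit L.det ∧ U.IsUpperTriangular ∧ IsUnit U.det ∧ IsUnit N.det ∧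
      M = L * insertPivot r 0 N * U := by
  obtain ⟨r, hr, hr_min⟩ : ∃ r, M r 0 ≠ 0 ∧ ∀ i < r, M i 0 = 0 := by
    have hcol : ∃ i, M i 0 ≠ 0 := by
      by_contra! h
      exact hM.ne_zero (det_eq_zero_of_column_eq_zero 0 h)
    obtain ⟨r, hr, hmin⟩ := wellFounded_lt.has_min {i | M i 0 ≠ 0} hcol
    exact ⟨r, hr, fun i hi => not_not.1 fun h => hmin i h hi⟩
  set e := finSuccEquivUnitSum r
  set f := finSuccEquivUnitSum (0 : Fin (n + 1))
  -- moves the pivot `M r 0` to the upper left corner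
  set Mb := M.submatrix e.symm f.symm
  set A := Mb.toBlocks₁₁
  have : Invertible A := invertibleOfIsUnitDet A (by simpa [A, Mb, e, f, toBlocks₁₁] using hr)
  set S := Mb.toBlocks₂₂ - Mb.toBlocks₂₁ * ⅟A * Mb.toBlocks₁₂
  have hfac := fromBlocks_eq_mul_mul_of_invertible₁₁ A Mb.toBlocks₁₂ Mb.toBlocks₂₁ Mb.toBlocks₂₂
  rw [fromBlocks_toBlocks] at hfac
  refine ⟨r, (fromBlocks A 0 Mb.toBlocks₂₁ 1).submatrix e e,
    (fromBlocks 1 (⅟A * Mb.toBlocks₁₂) 0 1).submatrix f f, S,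
    isLowerTriangular_fromBlocks_submatrix r A
      (fun a ha => by simpa [Mb, e, f, toBlocks₂₁] using hr_min _ ha) blockTriangular_one, ?_,
    isUpperTriangular_fromBlocks_submatrix 1 _ blockTriangular_one, ?_, ?_, ?_⟩
  · rw [det_submatrix_equiv_self, det_fromBlocks_zero₁₂, det_one, mul_one]
    exact isUnit_det_of_invertible A
  · rw [det_submatrix_equiv_self, det_fromBlocks_zero₂₁, det_one, det_one, mul_one]
    exact isUnit_one
  · have hMb : IsUnit Mb.det := by
      rwa [← isUnit_iff_isUnit_det, isUnit_submatrix_equiv, isUnit_iff_isUnit_det]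
    rw [hfac, det_mul, det_mul, det_fromBlocks_zero₂₁, det_one, one_mul] at hMb
    exact isUnit_of_mul_isUnit_right (isUnit_of_mul_isUnit_left hMb)
  · rw [insertPivot, submatrix_mul_equiv, submatrix_mul_equiv, ← hfac]
    simp [Mb]

theorem exists_lower_mul_permMatrix_mul_upper :
    ∀ {n : ℕ} (M : Matrix (Fin n) (Fin n) K), IsUnit M.det →
      ∃ (w : Equiv.Perm (Fin n)) (L U : Matrix (Fin n) (Fin n) K),
        L.IsLowerTriangular ∧ IsUnit L.det ∧ U.IsUpperTriangular ∧ IsUnit U.det ∧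
        M = L * w.permMatrix K * U
  | 0, M, _ => ⟨1, 1, 1, fun i => i.elim0, by simp, fun i => i.elim0, by simp,
      Subsingleton.elim _ _⟩
  | n + 1, M, hM => by
    obtain ⟨r, L, U, N, hL, hLdet, hU, hUdet, hN, rfl⟩ := exists_eq_mul_insertPivot_mul M hM
    obtain ⟨w, L', U', hL', hL'det, hU', hU'det, rfl⟩ := exists_lower_mul_permMatrix_mul_upper N hN
    refine ⟨w.insertPivot r 0, L * insertPivot r r L', insertPivot 0 0 U' * U,
      hL.mul (isLowerTriangular_fromBlocks_submatrix r 1 (fun _ _ => rfl) hL'), ?_,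
      (isUpperTriangular_fromBlocks_submatrix 1 0 hU').mul hU, ?_, ?_⟩
    · rw [det_mul, det_insertPivot]
      exact hLdet.mul hL'det
    · rw [det_mul, det_insertPivot]
      exact hU'det.mul hUdet
    · rw [← insertPivot_permMatrix, ← insertPivot_mul_insertPivot r 0 0,
        ← insertPivot_mul_insertPivot r r 0]
      simp only [Matrix.mul_assoc]

end Matrix

open scoped Classical in
lemma ncard_Iic_inter_preimage {ι κ : Type*} [PartialOrder ι] [Finite ι] (f : ι → κ) (a : ι)
    (t : Set κ) :
    (Iic a ∩ f ⁻¹' t).ncard = (Iio a ∩ f ⁻¹' t).ncard + if f a ∈ t then 1 else 0 := by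
  rw [← Iio_insert]
  split_ifs with h
  · rw [insert_inter_of_mem (mem_preimage.2 h), ncard_insert_of_notMem fun h' => lt_irrefl a h'.1]
  · rw [insert_inter_of_notMem (mt mem_preimage.1 h), add_zero]

theorem eq_of_ncard_inter_preimage_eq {ι κ : Type*} [PartialOrder ι] [Finite ι] [PartialOrder κ]
    {f g : ι → κ} (h : ∀ s t, IsLowerSet s → IsLowerSet t →
      (s ∩ f ⁻¹' t).ncard = (s ∩ g ⁻¹' t).ncard) : f = g := by
  have hmem : ∀ a t, IsLowerSet t → (f a ∈ t ↔ g a ∈ t) := by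
    intro a t ht
    have := ncard_Iic_inter_preimage f a t
    rw [h _ _ (isLowerSet_Iic a) ht, h _ _ (isLowerSet_Iio a) ht,
      ncard_Iic_inter_preimage g] at this
    by_cases hf : f a ∈ t <;> by_cases hg : g a ∈ t <;> simp_all
  funext a
  exact le_antisymm ((hmem a _ (isLowerSet_Iic _)).2 le_rfl)
    ((hmem a _ (isLowerSet_Iic _)).1 le_rfl)

namespace Matrix

section CornerRank

variable {ι K : Type*} [Fintype ι] [DecidableEq ι] [Field K]

/-- The rank of the submatrix of `M` with rows in `s` and columns in `t`, computed without
reindexing by zeroing the other rows and columns. -/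
noncomputable def cornerRank (M : Matrix ι ι K) (s t : Set ι) : ℕ :=
  (diagonal (s.indicator (1 : ι → K)) * M * diagonal (t.indicator (1 : ι → K))).rank

lemma cornerRank_permMatrix (w : Equiv.Perm ι) (s t : Set ι) :
    (w.permMatrix K).cornerRank s t = (s ∩ w ⁻¹' t).ncard := by
  classical
  have hw : diagonal (s.indicator (1 : ι → K)) * w.permMatrix K * diagonal (t.indicator 1) =
      diagonal ((s ∩ w ⁻¹' t).indicator 1) * w.permMatrix K := by
    ext i j
    by_cases hij : w i = j
    · subst hij
      simp [PEquiv.toMatrix_apply, Set.inter_indicator_one, Set.indicator_apply]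
    · simp [PEquiv.toMatrix_apply, hij]
  have hdet : IsUnit (w.permMatrix K).det := by
    rw [det_permutation]
    exact (Units.map (Int.castRingHom K).toMonoidHom (Equiv.Perm.sign w)).isUnit
  rw [cornerRank, hw, rank_mul_eq_left_of_isUnit_det _ _ hdet, rank_diagonal,
    Fintype.card_subtype, ← Set.ncard_coe_finset]
  congr 1
  ext i
  simp [Set.indicator_apply]

variable [LinearOrder ι]

lemma diagonal_indicator_mul_of_isLowerTriangular {s : Set ι} (hs : IsLowerSet s)
    {L : Matrix ι ι K} (hL : L.IsLowerTriangular) :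
    diagonal (s.indicator (1 : ι → K)) * L =
      diagonal (s.indicator (1 : ι → K)) * L * diagonal (s.indicator (1 : ι → K)) := by
  ext i j
  simp only [diagonal_mul, mul_diagonal]
  by_cases hj : j ∈ s
  · simp [hj]
  by_cases hi : i ∈ s
  · simp [hL (lt_of_not_ge fun hji => hj (hs hji hi))]
  · simp [hi]

lemma rank_diagonal_indicator_mul_lower_mul_le {s : Set ι} (hs : IsLowerSet s)
    {L : Matrix ι ι K} (hL : L.IsLowerTriangular) {κ : Type*} [Fintype κ] (X : Matrix ι κ K) :
    (diagonal (s.indicator (1 : ι → K)) * (L * X)).rank ≤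
      (diagonal (s.indicator (1 : ι → K)) * X).rank := by
  rw [← Matrix.mul_assoc, diagonal_indicator_mul_of_isLowerTriangular hs hL, Matrix.mul_assoc]
  exact rank_mul_le_right _ _

lemma rank_diagonal_indicator_mul_lower_mul {s : Set ι} (hs : IsLowerSet s)
    {L : Matrix ι ι K} (hL : L.IsLowerTriangular) (hLdet : IsUnit L.det)
    {κ : Type*} [Fintype κ] (X : Matrix ι κ K) :
    (diagonal (s.indicator (1 : ι → K)) * (L * X)).rank =
      (diagonal (s.indicator (1 : ι → K)) * X).rank := by
  have := L.invertibleOfIsUnitDet hLdet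
  refine (rank_diagonal_indicator_mul_lower_mul_le hs hL X).antisymm ?_
  calc (diagonal (s.indicator (1 : ι → K)) * X).rank
      = (diagonal (s.indicator (1 : ι → K)) * (L⁻¹ * (L * X))).rank := by
        rw [inv_mul_cancel_left_of_invertible]
    _ ≤ _ := rank_diagonal_indicator_mul_lower_mul_le hs
        (blockTriangular_inv_of_blockTriangular hL) _

lemma rank_mul_upper_mul_diagonal_indicator {t : Set ι} (ht : IsLowerSet t)
    {U : Matrix ι ι K} (hU : U.IsUpperTriangular) (hUdet : IsUnit U.det)
    {κ : Type*} [Fintype κ] (X : Matrix κ ι K) :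
    (X * U * diagonal (t.indicator (1 : ι → K))).rank =
      (X * diagonal (t.indicator (1 : ι → K))).rank := by
  rw [← Matrix.rank_transpose, ← Matrix.rank_transpose (X * _)]
  simp only [transpose_mul, diagonal_transpose]
  exact rank_diagonal_indicator_mul_lower_mul ht hU.transpose (by rwa [det_transpose]) Xᵀ

lemma cornerRank_lower_mul_upper {s t : Set ι} (hs : IsLowerSet s) (ht : IsLowerSet t)
    {L U : Matrix ι ι K} (hL : L.IsLowerTriangular) (hLdet : IsUnit L.det)
    (hU : U.IsUpperTriangular) (hUdet : IsUnit U.det) (X : Matrix ι ι K) :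
    (L * X * U).cornerRank s t = X.cornerRank s t := by
  unfold cornerRank
  calc (diagonal (s.indicator (1 : ι → K)) * (L * X * U) * diagonal (t.indicator 1)).rank
      = (diagonal (s.indicator (1 : ι → K)) * (L * (X * U * diagonal (t.indicator 1)))).rank := by
        simp only [Matrix.mul_assoc]
    _ = (diagonal (s.indicator (1 : ι → K)) * X * U * diagonal (t.indicator 1)).rank := by
        rw [rank_diagonal_indicator_mul_lower_mul hs hL hLdet]
        simp only [Matrix.mul_assoc]
    _ = _ := rank_mul_upper_mul_diagonal_indicator ht hU hUdet _

end CornerRank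

end Matrix

/-- Bruhat decomposition: any invertible matrix `M` over a field can be written as
`M = L · W · U` with `L` lower triangular invertible, `U` upper triangular
invertible and `W` a permutation matrix, and the permutation `w` is unique. -/
theorem bruhat_decomposition {K : Type*} [Field K] {n : ℕ}
    (M : Matrix (Fin n) (Fin n) K) (hM : IsUnit M.det) :
    ∃! w : Equiv.Perm (Fin n), ∃ L U : Matrix (Fin n) (Fin n) K,
      IsUnit L.det ∧ (∀ i j : Fin n, i < j → L i j = 0) ∧
      IsUnit U.det ∧ (∀ i j : Fin n, j < i → U i j = 0) ∧
      M = L * (w.permMatrix K) * U := by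
  obtain ⟨w, L, U, hL, hLdet, hU, hUdet, hLwU⟩ := exists_lower_mul_permMatrix_mul_upper M hM
  refine ⟨w, ⟨L, U, hLdet, fun i j h => hL h, hUdet, fun i j h => hU h, hLwU⟩, ?_⟩
  rintro w' ⟨L', U', hL'det, hL', hU'det, hU', hLwU'⟩
  refine DFunLike.coe_injective (eq_of_ncard_inter_preimage_eq fun s t hs ht => ?_)
  calc (s ∩ w' ⁻¹' t).ncard = M.cornerRank s t := by
        rw [hLwU', cornerRank_lower_mul_upper hs ht (fun i j h => hL' i j h) hL'det
          (fun i j h => hU' i j h) hU'det, cornerRank_permMatrix]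
    _ = (s ∩ w ⁻¹' t).ncard := by
        rw [hLwU, cornerRank_lower_mul_upper hs ht hL hLdet hU hUdet, cornerRank_permMatrix]
end
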